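/- Let G be the CDF of a positive random variable with mean g1 and second moment g2, and let μ satisfy μ g1 > 1. Then the unique root γ_G ∈ (0,1) of z = Ĝ(μ - μz) satisfies γ_G ≤ 1 + (g1²/g2)(ℓ - 1), where ℓ ∈ (0,1) is the unique root of z = exp(-μ g1 + μ g1 z). -/

import Mathlib

/-!
Write `L t = ∫ exp (-t x) dν`. For `x ≥ 0` the function `exp (-s x)` lies below the quadratic
in `x` that agrees with it at `x = 0` and touches it at `x = g2 / g1`; integrating this quadratic,
which only sees the first two moments, gives `L s ≤ 1 - (g1² / g2) (1 - exp (-s g2 / g1))`, the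
transform of the two-point law on `{0, g2 / g1}` with the same moments. At `t = m (1 - A)`, where
`A = 1 + (g1² / g2) (ℓ - 1)`, the fixed-point equation of `ℓ` turns this into `L t ≤ 1 - t / m`.
The strictly convex `L` meets the line `1 - t / m` at `0` and at `m (1 - γ)`, so it lies strictly
above that line beyond `m (1 - γ)`; hence `m (1 - A) ≤ m (1 - γ)`.
-/

open MeasureTheory Set Real

theorem exp_sub_one_sub_eq_sq_mul_integral (y : ℝ) :
    exp y - 1 - y = y ^ 2 * ∫ r in (0 : ℝ)..1, (1 - r) * exp (y * r) := by
  rcases eq_or_ne y 0 with rfl | hy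
  · simp
  set F : ℝ → ℝ := fun r => exp (y * r) * ((1 - r) / y + 1 / y ^ 2)
  have hF : ∀ r, HasDerivAt F ((1 - r) * exp (y * r)) r := by
    intro r
    refine (((hasDerivAt_id r).const_mul y).exp.mul
      (((hasDerivAt_id r).const_sub 1).div_const y |>.add_const (1 / y ^ 2))).congr_deriv ?_
    simp only [id]
    field_simp
    ring
  rw [intervalIntegral.integral_eq_sub_of_hasDerivAt (fun r _ => hF r)
    ((by fun_prop : Continuous fun r : ℝ => (1 - r) * exp (y * r)).intervalIntegrable 0 1)]
  simp only [F, mul_one, mul_zero, exp_zero, sub_self, sub_zero]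
  field_simp
  ring

theorem monotone_integral_one_sub_mul_exp_mul :
    Monotone fun y : ℝ => ∫ r in (0 : ℝ)..1, (1 - r) * exp (y * r) := by
  intro y v hyv
  refine intervalIntegral.integral_mono_on zero_le_one
    ((by fun_prop : Continuous fun r : ℝ => (1 - r) * exp (y * r)).intervalIntegrable 0 1)
    ((by fun_prop : Continuous fun r : ℝ => (1 - r) * exp (v * r)).intervalIntegrable 0 1)
    fun r hr => ?_
  gcongr
  · linarith [hr.2]
  · exact hr.1

theorem exp_le_one_add_add_sq_mul {y v : ℝ} (hv : 0 < v) (hyv : y ≤ v) :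
    exp y ≤ 1 + y + (exp v - 1 - v) / v ^ 2 * y ^ 2 := by
  have hK : (exp v - 1 - v) / v ^ 2 = ∫ r in (0 : ℝ)..1, (1 - r) * exp (v * r) := by
    rw [exp_sub_one_sub_eq_sq_mul_integral v]
    field_simp
  have hy := exp_sub_one_sub_eq_sq_mul_integral y
  rw [hK]
  nlinarith [mul_le_mul_of_nonneg_left (monotone_integral_one_sub_mul_exp_mul hyv) (sq_nonneg y)]

theorem integral_lt_integral_of_ae_lt {α : Type*} [MeasurableSpace α] {μ : Measure α} [NeZero μ]
    {f g : α → ℝ} (hf : Integrable f μ) (hg : Integrable g μ) (hfg : ∀ᵐ x ∂μ, f x < g x) :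
    ∫ x, f x ∂μ < ∫ x, g x ∂μ := by
  refine (integral_mono_ae hf hg (hfg.mono fun x hx => hx.le)).lt_of_ne fun h => ?_
  obtain ⟨x, hx, hlt⟩ := (((integral_eq_iff_of_ae_le hf hg (hfg.mono fun x hx => hx.le)).1 h).and
    hfg).exists
  exact hlt.ne hx

theorem integral_add_mul_add_mul_sq {ν : Measure ℝ} [IsProbabilityMeasure ν]
    (hint1 : Integrable (fun x => x) ν) (hint2 : Integrable (fun x => x ^ 2) ν) (a b c : ℝ) :
    ∫ x, (a + b * x + c * x ^ 2) ∂ν = a + b * ∫ x, x ∂ν + c * ∫ x, x ^ 2 ∂ν := by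
  have hlin : Integrable (fun x => a + b * x) ν := (integrable_const a).add (hint1.const_mul b)
  rw [integral_add hlin (hint2.const_mul c),
    integral_add (integrable_const a) (hint1.const_mul b), integral_const, integral_const_mul,
    integral_const_mul, probReal_univ, one_smul]

theorem integrable_exp_neg_mul {ν : Measure ℝ} [IsFiniteMeasure ν] (hν : ∀ᵐ x ∂ν, 0 ≤ x) {t : ℝ}
    (ht : 0 ≤ t) : Integrable (fun x => exp (-t * x)) ν := by
  refine (integrable_const 1).mono' (by fun_prop) ?_
  filter_upwards [hν] with x hx
  rw [norm_of_nonneg (exp_pos _).le, exp_le_one_iff]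
  nlinarith

theorem strictConvexOn_integral_exp_neg_mul {ν : Measure ℝ} [IsFiniteMeasure ν] [NeZero ν]
    (hν : ∀ᵐ x ∂ν, 0 < x) : StrictConvexOn ℝ (Ici 0) fun t => ∫ x, exp (-t * x) ∂ν := by
  have hint := fun {t : ℝ} (ht : t ∈ Ici 0) =>
    integrable_exp_neg_mul (hν.mono fun x hx => hx.le) (mem_Ici.1 ht)
  refine ⟨convex_Ici 0, fun t ht u hu htu a b ha hb hab => ?_⟩
  simp only [smul_eq_mul]
  rw [← integral_const_mul, ← integral_const_mul, ← integral_add ((hint ht).const_mul a)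
    ((hint hu).const_mul b)]
  refine integral_lt_integral_of_ae_lt (hint ((convex_Ici 0) ht hu ha.le hb.le hab))
    (((hint ht).const_mul a).add ((hint hu).const_mul b)) ?_
  filter_upwards [hν] with x hx
  have hne : -t * x ≠ -u * x := fun h => htu (by nlinarith [mul_right_cancel₀ hx.ne' h])
  have key := strictConvexOn_exp.2 (mem_univ _) (mem_univ _) hne ha hb hab
  simp only [smul_eq_mul] at key
  rwa [show -(a * t + b * u) * x = a * (-t * x) + b * (-u * x) by ring]

theorem StrictConvexOn.le_of_slope_le_slope {s : Set ℝ} {f : ℝ → ℝ} (hf : StrictConvexOn ℝ s f)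
    {x a b : ℝ} (hx : x ∈ s) (ha : a ∈ s) (hb : b ∈ s) (hxa : x < a)
    (h : slope f x b ≤ slope f x a) : b ≤ a := by
  by_contra! hab
  have := hf.secant_strict_mono hx ha hb hxa.ne' (hxa.trans hab).ne' hab
  rw [slope_def_field, slope_def_field] at h
  linarith

theorem integral_exp_neg_mul_le {ν : Measure ℝ} [IsProbabilityMeasure ν] (hν : ∀ᵐ x ∂ν, 0 ≤ x)
    (hint1 : Integrable (fun x => x) ν) (hint2 : Integrable (fun x => x ^ 2) ν) {g1 g2 s : ℝ}
    (hmean : ∫ x, x ∂ν = g1) (hsec : ∫ x, x ^ 2 ∂ν = g2) (hg1 : 0 < g1) (hg2 : 0 < g2)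
    (hs : 0 < s) :
    ∫ x, exp (-s * x) ∂ν ≤ 1 - g1 ^ 2 / g2 * (1 - exp (-s * (g2 / g1))) := by
  set v := s * (g2 / g1)
  have hv : 0 < v := by positivity
  set K := (exp v - 1 - v) / v ^ 2
  set a := exp (-v) * (1 + v + K * v ^ 2)
  set b := -exp (-v) * s * (1 + 2 * K * v)
  set c := exp (-v) * K * s ^ 2
  have hmajor : ∀ᵐ x ∂ν, exp (-s * x) ≤ a + b * x + c * x ^ 2 := by
    filter_upwards [hν] with x hx
    calc exp (-s * x) = exp (-v) * exp (v - s * x) := by rw [← exp_add]; ring_nf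
      _ ≤ exp (-v) * (1 + (v - s * x) + K * (v - s * x) ^ 2) :=
        mul_le_mul_of_nonneg_left (exp_le_one_add_add_sq_mul hv (by nlinarith)) (exp_pos _).le
      _ = a + b * x + c * x ^ 2 := by ring
  calc ∫ x, exp (-s * x) ∂ν ≤ ∫ x, (a + b * x + c * x ^ 2) ∂ν :=
        integral_mono_ae (integrable_exp_neg_mul hν hs.le)
          (((integrable_const a).add (hint1.const_mul b)).add (hint2.const_mul c)) hmajor
    _ = a + b * g1 + c * g2 := by rw [integral_add_mul_add_mul_sq hint1 hint2, hmean, hsec]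
    _ = 1 - g1 ^ 2 / g2 * (1 - exp (-s * (g2 / g1))) := by
      simp only [a, b, c, K, v, neg_mul, exp_neg]
      field_simp
      ring

/-- Rolski's upper bound: if `γ ∈ (0,1)` is the root of `z = Ĝ(m - m z)` for the law
`ν` of a positive random variable with mean `g1` and second moment `g2`, `m g1 > 1`,
and `ℓ ∈ (0,1)` is the root of `z = exp(-m g1 (1 - z))`, then
`γ ≤ 1 + (g1²/g2)(ℓ - 1)`. -/
theorem root_le_rolski_bound
    (ν : Measure ℝ) [IsProbabilityMeasure ν] (hνpos : ν (Set.Iic 0) = 0)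
    (g1 g2 m γ l : ℝ) (hm : 0 < m) (hρ : 1 < m * g1)
    (hint1 : Integrable (fun x => x) ν) (hint2 : Integrable (fun x => x ^ 2) ν)
    (hmean : ∫ x, x ∂ν = g1) (hsec : ∫ x, x ^ 2 ∂ν = g2)
    (hγ : γ ∈ Set.Ioo (0 : ℝ) 1)
    (hγroot : (∫ x, Real.exp (-(m - m * γ) * x) ∂ν) = γ)
    (hl : l ∈ Set.Ioo (0 : ℝ) 1)
    (hlroot : l = Real.exp (-(m * g1) + m * g1 * l)) :
    γ ≤ 1 + (g1 ^ 2 / g2) * (l - 1) := by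
  have hpos : ∀ᵐ x ∂ν, 0 < x := by
    simpa using measure_eq_zero_iff_ae_notMem.1 hνpos
  have hg1 : 0 < g1 := pos_of_mul_pos_right (by linarith) hm.le
  have hg2 : 0 < g2 := by
    simpa [hsec] using integral_lt_integral_of_ae_lt (integrable_const 0) hint2
      (hpos.mono fun x hx => by positivity)
  set L := fun t => ∫ x, exp (-t * x) ∂ν
  set p := g1 ^ 2 / g2
  set t := m * p * (1 - l)
  have ht : 0 < t := mul_pos (mul_pos hm (by positivity)) (by linarith [hl.2])
  have hLt : L t ≤ 1 - t / m := by
    calc L t ≤ 1 - p * (1 - exp (-t * (g2 / g1))) :=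
          integral_exp_neg_mul_le (hpos.mono fun _ => le_of_lt) hint1 hint2 hmean hsec hg1 hg2 ht
      _ = 1 - t / m := by
        rw [show -t * (g2 / g1) = -(m * g1) + m * g1 * l by simp only [t, p]; field_simp; ring,
          ← hlroot]
        simp only [t]
        field_simp
  have hL0 : L 0 = 1 := by simp [L]
  have htγ : 0 < m - m * γ := by nlinarith [hγ.2]
  have hslope_γ : slope L 0 (m - m * γ) = -1 / m := by
    rw [slope_def_field, hL0, sub_zero, div_eq_div_iff htγ.ne' hm.ne']
    simp only [L, hγroot]
    ring
  have hslope_t : slope L 0 t ≤ -1 / m := by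
    rw [slope_def_field, hL0, sub_zero, div_le_iff₀ ht]
    linarith [show -1 / m * t = -(t / m) by ring]
  have htle : t ≤ m - m * γ := (strictConvexOn_integral_exp_neg_mul hpos).le_of_slope_le_slope
    (mem_Ici.2 le_rfl) htγ.le ht.le htγ (hslope_t.trans hslope_γ.ge)
  simp only [t] at htle
  nlinarith
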